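/- arXiv:1511.06905 — 2 statements merged into one kernel-verified Lean document; each statement's English description precedes it below -/
import Mathlib

section
/- If y is a vertex in T_2(e_i) (the component of the shortest path tree T_s \ {e_i} containing v_i), then every shortest y-t path in G avoids the edge e_i; in particular d_G(v_{i-1}, y) > d_G(v_i, y) is impossible simultaneously with d_G(v_i, y) > d_G(v_{i-1}, y), yielding d_{G \ e_i}(y, t) = d_G(y, t). -/
/-!
Write `a = v_{i-1}`, `b = v_i`. In the tree `T` the edge `ab` is a bridge separating `s` from the
subtree of `b`, and since `T` is a shortest-path tree, every `x` in that subtree satisfies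
`w(ab) + d_{T - ab}(b, x) ≤ d_G(a, x)`. So for `y` and `t` in the subtree, each crossing of `ab` by a
`y`-`t` walk can be cut out: a crossing `a → b` is replaced by the tree path `y ⇝ b`, a crossing
`b → a` by the tree path `b ⇝ t`, each time saving at least `w(ab) > 0`.
-/

open Classical SimpleGraph

noncomputable section

variable {V : Type*}

/-- Total weight of a walk, summing `w` over its darts. -/
def walkWeight (G : SimpleGraph V) (w : V → V → ℝ) {u v : V} (p : G.Walk u v) : ℝ :=
  (p.darts.map fun d => w d.fst d.snd).sum

/-- Weighted shortest-path distance: infimum of walk weights. -/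
def wdist (G : SimpleGraph V) (w : V → V → ℝ) (u v : V) : ℝ :=
  sInf {r | ∃ p : G.Walk u v, walkWeight G w p = r}

/-- The graph obtained by deleting a set of vertices (kept on the same vertex type). -/
def delVerts (G : SimpleGraph V) (S : Set V) : SimpleGraph V where
  Adj a b := G.Adj a b ∧ a ∉ S ∧ b ∉ S
  symm := ⟨fun a b h => ⟨h.1.symm, h.2.2, h.2.1⟩⟩
  loopless := ⟨fun a h => G.loopless.irrefl a h.1⟩

/-- `u` is in the subtree of `T` rooted at the `k`-th vertex of the path `vp`. -/
def inSub (T : SimpleGraph V) (vp : ℕ → V) (k : ℕ) (u : V) : Prop :=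
  k = 0 ∨ (T.deleteEdges {s(vp (k-1), vp k)}).Reachable (vp k) u

/-- The label of a vertex: the largest `k ≤ l` with `u` in the subtree rooted at `vp k`. -/
def label (T : SimpleGraph V) (vp : ℕ → V) (l : ℕ) (u : V) : ℕ :=
  sSup {k | k ≤ l ∧ inSub T vp k u}

lemma List.Nodup.getElem_notMem_take_and_drop {α : Type*} {l : List α} (hl : l.Nodup) {k : ℕ}
    (hk : k < l.length) : l[k] ∉ l.take k ∧ l[k] ∉ l.drop (k + 1) := by
  rw [← List.take_append_drop k l, List.drop_eq_getElem_cons hk] at hl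
  obtain ⟨-, hdrop, hdisj⟩ := List.nodup_append.1 hl
  exact ⟨fun h => hdisj _ h _ List.mem_cons_self rfl, (List.nodup_cons.1 hdrop).1⟩

variable {G H : SimpleGraph V} {w : V → V → ℝ} {u v x y : V}

@[simp]
lemma walkWeight_nil : walkWeight G w (.nil : G.Walk u u) = 0 := by simp [walkWeight]

@[simp]
lemma walkWeight_cons (h : G.Adj u v) (q : G.Walk v x) :
    walkWeight G w (.cons h q) = w u v + walkWeight G w q := by simp [walkWeight]

lemma walkWeight_append (q : G.Walk u v) (r : G.Walk v x) :
    walkWeight G w (q.append r) = walkWeight G w q + walkWeight G w r := by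
  simp [walkWeight, Walk.darts_append]

lemma walkWeight_reverse (hws : ∀ a b, w a b = w b a) (q : G.Walk u v) :
    walkWeight G w q.reverse = walkWeight G w q := by
  simp only [walkWeight, Walk.darts_reverse, List.map_reverse, List.sum_reverse, List.map_map]
  congr 1
  exact List.map_congr_left fun d _ => hws d.snd d.fst

lemma walkWeight_mapLe (hle : G ≤ H) (q : G.Walk u v) :
    walkWeight H w (q.mapLe hle) = walkWeight G w q := by
  simp [walkWeight, Walk.mapLe, Walk.darts_map, Function.comp_def]

lemma walkWeight_nonneg (hw : ∀ a b, G.Adj a b → 0 ≤ w a b) (q : G.Walk u v) :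
    0 ≤ walkWeight G w q := by
  induction q with
  | nil => simp
  | cons h q ih => rw [walkWeight_cons]; exact add_nonneg (hw _ _ h) ih

lemma wdist_le_walkWeight (hw : ∀ a b, G.Adj a b → 0 ≤ w a b) (q : G.Walk u v) :
    wdist G w u v ≤ walkWeight G w q :=
  csInf_le ⟨0, fun _ ⟨q', hq'⟩ => hq' ▸ walkWeight_nonneg hw q'⟩ ⟨q, rfl⟩

lemma wdist_nonneg (hw : ∀ a b, G.Adj a b → 0 ≤ w a b) : 0 ≤ wdist G w u v :=
  Real.sInf_nonneg fun _ ⟨q, hq⟩ => hq ▸ walkWeight_nonneg hw q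

lemma wdist_self (hw : ∀ a b, G.Adj a b → 0 ≤ w a b) : wdist G w u u = 0 :=
  le_antisymm (by simpa using wdist_le_walkWeight hw (.nil : G.Walk u u)) (wdist_nonneg hw)

lemma wdist_le_of_adj (hw : ∀ a b, G.Adj a b → 0 ≤ w a b) (h : G.Adj u v) :
    wdist G w u v ≤ w u v := by
  simpa using wdist_le_walkWeight hw (.cons h .nil)

lemma exists_walkWeight_lt_wdist_add (h : G.Reachable u v) {ε : ℝ} (hε : 0 < ε) :
    ∃ q : G.Walk u v, walkWeight G w q < wdist G w u v + ε := by
  obtain ⟨_, ⟨q, rfl⟩, hq⟩ := Real.lt_sInf_add_pos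
    (s := {r | ∃ q : G.Walk u v, walkWeight G w q = r}) ⟨_, h.some, rfl⟩ hε
  exact ⟨q, hq⟩

lemma wdist_triangle (hw : ∀ a b, G.Adj a b → 0 ≤ w a b) (huv : G.Reachable u v)
    (hvx : G.Reachable v x) : wdist G w u x ≤ wdist G w u v + wdist G w v x := by
  refine le_of_forall_pos_le_add fun ε hε => ?_
  obtain ⟨q, hq⟩ := exists_walkWeight_lt_wdist_add (w := w) huv (half_pos hε)
  obtain ⟨r, hr⟩ := exists_walkWeight_lt_wdist_add (w := w) hvx (half_pos hε)
  have := wdist_le_walkWeight hw (q.append r)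
  rw [walkWeight_append] at this
  linarith

lemma wdist_le_add_wdist_of_adj (hw : ∀ a b, G.Adj a b → 0 ≤ w a b) (h : G.Adj u v)
    (hvx : G.Reachable v x) : wdist G w u x ≤ w u v + wdist G w v x :=
  (wdist_triangle hw h.reachable hvx).trans (by gcongr; exact wdist_le_of_adj hw h)

lemma wdist_le_wdist_add_of_adj (hw : ∀ a b, G.Adj a b → 0 ≤ w a b) (huv : G.Reachable u v)
    (h : G.Adj v x) : wdist G w u x ≤ wdist G w u v + w v x :=
  (wdist_triangle hw huv h.reachable).trans (by gcongr; exact wdist_le_of_adj hw h)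

lemma wdist_mono (hw : ∀ a b, H.Adj a b → 0 ≤ w a b) (hle : G ≤ H) (h : G.Reachable u v) :
    wdist H w u v ≤ wdist G w u v := by
  refine le_csInf ⟨_, h.some, rfl⟩ fun _ ⟨q, hq⟩ => ?_
  rw [← hq, ← walkWeight_mapLe hle]
  exact wdist_le_walkWeight hw _

lemma wdist_comm (hws : ∀ a b, w a b = w b a) : wdist G w u v = wdist G w v u := by
  have key : ∀ u v, {r | ∃ q : G.Walk u v, walkWeight G w q = r} ⊆
      {r | ∃ q : G.Walk v u, walkWeight G w q = r} :=
    fun _ _ _ ⟨q, hq⟩ => ⟨q.reverse, (walkWeight_reverse hws q).trans hq⟩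
  exact congrArg sInf ((key u v).antisymm (key v u))

lemma reachable_deleteEdges_of_walk {T : SimpleGraph V} {e : Sym2 V} (q : G.Walk u v)
    (hqT : ∀ f ∈ q.edges, f ∈ T.edgeSet) (he : e ∉ q.edges) : (T.deleteEdges {e}).Reachable u v :=
  ⟨q.transfer _ fun f hf => by
    rw [edgeSet_deleteEdges]
    exact ⟨hqT f hf, fun hfe => he (Set.mem_singleton_iff.1 hfe ▸ hf)⟩⟩

lemma SimpleGraph.Walk.IsPath.reachable_deleteEdges_getVert {T : SimpleGraph V} {p : G.Walk u v}
    (hp : p.IsPath) (hpT : ∀ e ∈ p.edges, e ∈ T.edgeSet) {k : ℕ} (hk : k < p.length) :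
    (T.deleteEdges {s(p.getVert k, p.getVert (k + 1))}).Reachable u (p.getVert k) ∧
      (T.deleteEdges {s(p.getVert k, p.getVert (k + 1))}).Reachable (p.getVert (k + 1)) v := by
  have hk' : k < p.edges.length := by simpa using hk
  obtain ⟨htake, hdrop⟩ := hp.edges_nodup.getElem_notMem_take_and_drop hk'
  rw [Walk.getElem_edges] at htake hdrop
  refine ⟨reachable_deleteEdges_of_walk (p.take k) (fun f hf => hpT f ?_) ?_,
    reachable_deleteEdges_of_walk (p.drop (k + 1)) (fun f hf => hpT f ?_) ?_⟩
  · exact List.mem_of_mem_take (Walk.edges_take p k ▸ hf)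
  · rwa [Walk.edges_take]
  · exact List.mem_of_mem_drop (Walk.edges_drop p (k + 1) ▸ hf)
  · rwa [Walk.edges_drop]

section DeleteEdge

variable {a b : V}

lemma SimpleGraph.IsBridge.wdist_deleteEdges_le_walkWeight {T : SimpleGraph V}
    (hw : ∀ u v, T.Adj u v → 0 ≤ w u v) (hab : T.IsBridge s(a, b))
    (hx : (T.deleteEdges {s(a, b)}).Reachable b x) (W : T.Walk u x) :
    ((T.deleteEdges {s(a, b)}).Reachable b u →
      wdist (T.deleteEdges {s(a, b)}) w u x ≤ walkWeight T w W) ∧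
    ((T.deleteEdges {s(a, b)}).Reachable a u →
      wdist (T.deleteEdges {s(a, b)}) w u a + w a b + wdist (T.deleteEdges {s(a, b)}) w b x ≤
        walkWeight T w W) := by
  set E := T.deleteEdges {s(a, b)}
  have hwE : ∀ u v, E.Adj u v → 0 ≤ w u v := fun u v h => hw u v (deleteEdges_le _ h)
  have hsep : ¬ E.Reachable a b := isBridge_iff.1 hab
  induction W with
  | nil => exact ⟨fun _ => by simp [wdist_self hwE], fun hax => absurd (hax.trans hx.symm) hsep⟩
  | @cons u c x h W ih =>
    obtain ⟨ih_b, ih_a⟩ := ih hx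
    rw [walkWeight_cons]
    by_cases huc : s(u, c) = s(a, b)
    · have hwuc := hw u c h
      have hwcu := hw c u h.symm
      rcases Sym2.eq_iff.1 huc with ⟨rfl, rfl⟩ | ⟨rfl, rfl⟩
      · refine ⟨fun hcu => absurd hcu.symm hsep, fun _ => ?_⟩
        have := ih_b (.refl _)
        rw [wdist_self hwE]
        linarith
      · refine ⟨fun _ => ?_, fun hcu => absurd hcu hsep⟩
        have := ih_a (.refl _)
        have := wdist_nonneg hwE (w := w) (u := c) (v := c)
        linarith
    · have hadj : E.Adj u c := deleteEdges_adj.2 ⟨h, by simpa using huc⟩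
      refine ⟨fun hbu => ?_, fun hau => ?_⟩
      · have hbc := hbu.trans hadj.reachable
        have := wdist_le_add_wdist_of_adj hwE hadj (hbc.symm.trans hx)
        linarith [ih_b hbc]
      · have hac := hau.trans hadj.reachable
        have := wdist_le_add_wdist_of_adj hwE hadj hac.symm
        linarith [ih_a hac]

/-- Compare the tree walk `s ⇝ a → b ⇝ x` with `d(s, x) ≤ d(s, a) + d(a, x)`. -/
lemma add_wdist_deleteEdges_le_wdist {T : SimpleGraph V} {s : V}
    (hw : ∀ u v, G.Adj u v → 0 ≤ w u v) (hTG : T ≤ G) (hab : T.IsBridge s(a, b))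
    (hsx : T.Reachable s x) (hSPT : wdist T w s x = wdist G w s x)
    (hs : (T.deleteEdges {s(a, b)}).Reachable a s) (hx : (T.deleteEdges {s(a, b)}).Reachable b x) :
    w a b + wdist (T.deleteEdges {s(a, b)}) w b x ≤ wdist G w a x := by
  have hEG : T.deleteEdges {s(a, b)} ≤ G := (deleteEdges_le _).trans hTG
  have hcross : wdist (T.deleteEdges {s(a, b)}) w s a + w a b +
      wdist (T.deleteEdges {s(a, b)}) w b x ≤ wdist T w s x :=
    le_csInf ⟨_, hsx.some, rfl⟩ fun _ ⟨W, hW⟩ => hW ▸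
      (hab.wdist_deleteEdges_le_walkWeight (fun u v h => hw u v (hTG h)) hx W).2 hs
  have hsa := wdist_mono hw hEG hs.symm
  have htri := wdist_triangle hw (hs.symm.mono hEG) ((hs.mono hEG).trans (hsx.mono hTG))
  linarith

/-- A crossing `a → b` of `q` is replaced by a detour `y ⇝ b` (hypothesis `hy`), a crossing `b → a`
by a detour `b ⇝ t` (hypothesis `ht`); `x` is the current position of the induction on `q`. -/
lemma wdist_deleteEdges_le_wdist_add_walkWeight {t : V} (hw : ∀ u v, G.Adj u v → 0 ≤ w u v)
    (hyb : (G.deleteEdges {s(a, b)}).Reachable y b) (hbt : (G.deleteEdges {s(a, b)}).Reachable b t)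
    (hy : w a b + wdist (G.deleteEdges {s(a, b)}) w y b ≤ wdist G w y a)
    (ht : w a b + wdist (G.deleteEdges {s(a, b)}) w b t ≤ wdist G w a t)
    (q : G.Walk x t) (hyx : (G.deleteEdges {s(a, b)}).Reachable y x) :
    wdist (G.deleteEdges {s(a, b)}) w y t ≤
        wdist (G.deleteEdges {s(a, b)}) w y x + walkWeight G w q ∧
    (s(a, b) ∈ q.edges → wdist (G.deleteEdges {s(a, b)}) w y t + w a b ≤
        wdist (G.deleteEdges {s(a, b)}) w y x + walkWeight G w q) := by
  set E := G.deleteEdges {s(a, b)}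
  have hwE : ∀ u v, E.Adj u v → 0 ≤ w u v := fun u v h => hw u v (deleteEdges_le _ h)
  induction q with
  | nil => simp
  | @cons x z t h q ih =>
    rw [walkWeight_cons]
    by_cases hxz : s(x, z) = s(a, b)
    · have hwxz := hw x z h
      have hwzx := hw z x h.symm
      rcases Sym2.eq_iff.1 hxz with ⟨rfl, rfl⟩ | ⟨rfl, rfl⟩
      · have := (ih hbt ht hyb).1
        have := wdist_mono hw (deleteEdges_le _) hyx
        constructor <;> intros <;> linarith
      · have := wdist_triangle hwE hyx hbt
        have := wdist_le_walkWeight hw q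
        constructor <;> intros <;> linarith
    · have hadj : E.Adj x z := deleteEdges_adj.2 ⟨h, by simpa using hxz⟩
      obtain ⟨ih₁, ih₂⟩ := ih hbt ht (hyx.trans hadj.reachable)
      have := wdist_le_wdist_add_of_adj hwE hyx hadj
      have hmem : s(a, b) ∈ (Walk.cons h q).edges ↔ s(a, b) ∈ q.edges := by
        simp [Ne.symm hxz]
      rw [hmem]
      exact ⟨by linarith, fun he => by linarith [ih₂ he]⟩

lemma wdist_deleteEdges_le_walkWeight_of_shortestPathTree {T : SimpleGraph V} {s t : V}
    (hw : ∀ u v, G.Adj u v → 0 ≤ w u v) (hws : ∀ u v, w u v = w v u) (hTG : T ≤ G)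
    (hT : T.IsTree) (hSPT : ∀ v, wdist T w s v = wdist G w s v) (hab : T.Adj a b)
    (hs : (T.deleteEdges {s(a, b)}).Reachable a s) (hy : (T.deleteEdges {s(a, b)}).Reachable b y)
    (ht : (T.deleteEdges {s(a, b)}).Reachable b t) (q : G.Walk y t) :
    wdist (G.deleteEdges {s(a, b)}) w y t ≤ walkWeight G w q ∧
    (s(a, b) ∈ q.edges → wdist (G.deleteEdges {s(a, b)}) w y t + w a b ≤ walkWeight G w q) := by
  have hTE : T.deleteEdges {s(a, b)} ≤ G.deleteEdges {s(a, b)} := deleteEdges_mono hTG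
  have hwE : ∀ u v, (G.deleteEdges {s(a, b)}).Adj u v → 0 ≤ w u v :=
    fun u v h => hw u v (deleteEdges_le _ h)
  have hbridge : T.IsBridge s(a, b) := isAcyclic_iff_forall_adj_isBridge.1 hT.isAcyclic hab
  have key : ∀ x, (T.deleteEdges {s(a, b)}).Reachable b x →
      w a b + wdist (T.deleteEdges {s(a, b)}) w b x ≤ wdist G w a x := fun x hx =>
    add_wdist_deleteEdges_le_wdist hw hTG hbridge (hT.connected s x) (hSPT x) hs hx
  have hy' : w a b + wdist (G.deleteEdges {s(a, b)}) w y b ≤ wdist G w y a := by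
    rw [wdist_comm hws (u := y), wdist_comm hws (u := y)]
    linarith [key y hy, wdist_mono hwE hTE hy]
  have ht' : w a b + wdist (G.deleteEdges {s(a, b)}) w b t ≤ wdist G w a t := by
    linarith [key t ht, wdist_mono hwE hTE ht]
  simpa [wdist_self hwE] using
    wdist_deleteEdges_le_wdist_add_walkWeight hw (hy.symm.mono hTE) (ht.mono hTE) hy' ht' q .rfl

end DeleteEdge

theorem stmt2_general {V : Type*}
    (G : SimpleGraph V) (w : V → V → ℝ)
    (hw : ∀ a b, G.Adj a b → 0 < w a b) (hws : ∀ a b, w a b = w b a)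
    (s t : V) (p : G.Walk s t) (hp : p.IsPath)
    (T : SimpleGraph V) (hTG : T ≤ G) (hT : T.IsTree)
    (hSPT : ∀ v, wdist T w s v = wdist G w s v)
    (hPT : ∀ e ∈ p.edges, e ∈ T.edgeSet)
    (i : ℕ) (hi1 : 1 ≤ i) (hil : i ≤ p.length)
    (y : V)
    (hy : (T.deleteEdges {s(p.getVert (i-1), p.getVert i)}).Reachable (p.getVert i) y) :
    (∀ q : G.Walk y t, q.IsPath → walkWeight G w q = wdist G w y t →
      s(p.getVert (i-1), p.getVert i) ∉ q.edges) ∧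
    wdist (G.deleteEdges {s(p.getVert (i-1), p.getVert i)}) w y t = wdist G w y t := by
  obtain ⟨k, rfl⟩ : ∃ k, i = k + 1 := ⟨i - 1, by omega⟩
  rw [Nat.add_sub_cancel] at hy ⊢
  have hk : k < p.length := by omega
  obtain ⟨hs, ht⟩ := hp.reachable_deleteEdges_getVert hPT hk
  have hab : T.Adj (p.getVert k) (p.getVert (k + 1)) :=
    hPT _ (p.mk_mem_edges_iff_exists.2 ⟨k, hk, rfl⟩)
  have hw0 : ∀ a b, G.Adj a b → 0 ≤ w a b := fun a b h => (hw a b h).le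
  have hbound := wdist_deleteEdges_le_walkWeight_of_shortestPathTree hw0 hws hTG hT hSPT hab
    hs.symm hy ht
  have hyt := hy.symm.trans ht
  have hge : wdist G w y t ≤ wdist (G.deleteEdges {s(p.getVert k, p.getVert (k + 1))}) w y t :=
    wdist_mono hw0 (deleteEdges_le _) (hyt.mono (deleteEdges_mono hTG))
  refine ⟨fun q _ hq he => ?_, le_antisymm ?_ hge⟩
  · linarith [(hbound q).2 he, hw _ _ (hTG hab)]
  · exact le_csInf ⟨_, (hyt.mono ((deleteEdges_le _).trans hTG)).some, rfl⟩
      fun _ ⟨q, hq⟩ => hq ▸ (hbound q).1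

theorem stmt2 {V : Type*}
    (G : SimpleGraph V) (hconn : G.Connected) (w : V → V → ℝ)
    (hw : ∀ a b, G.Adj a b → 0 < w a b) (hws : ∀ a b, w a b = w b a)
    (s t : V) (p : G.Walk s t) (hp : p.IsPath)
    (hps : walkWeight G w p = wdist G w s t)
    (T : SimpleGraph V) (hTG : T ≤ G) (hT : T.IsTree)
    (hSPT : ∀ v, wdist T w s v = wdist G w s v)
    (hPT : ∀ e ∈ p.edges, e ∈ T.edgeSet)
    (i : ℕ) (hi1 : 1 ≤ i) (hil : i ≤ p.length)
    (y : V)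
    (hy : (T.deleteEdges {s(p.getVert (i-1), p.getVert i)}).Reachable (p.getVert i) y) :
    (∀ q : G.Walk y t, q.IsPath → walkWeight G w q = wdist G w y t →
      s(p.getVert (i-1), p.getVert i) ∉ q.edges) ∧
    wdist (G.deleteEdges {s(p.getVert (i-1), p.getVert i)}) w y t = wdist G w y t :=
  stmt2_general G w hw hws s t p hp T hTG hT hSPT hPT i hi1 hil y hy
end
end

section
/- With vertex labels defined from T_s as above, if a non-tree edge (x, y) satisfies label(x) = i and label(y) = i + r for some r > 0, then (x, y) ∈ C(e_j) for all j with i < j ≤ i + r. -/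
/-!
Write `eᵢ = s(vᵢ₋₁, vᵢ)`. Since `T` is a tree, every `eᵢ` is a bridge, so `T - eᵢ` has exactly two
components: the root side containing `s = v₀, …, vᵢ₋₁`, and the subtree of `vᵢ`. These subtrees are
nested along the path: a walk in `T - e_k` from `v_k` cannot pass through `e_j` for `j < k`, since
`v_j` lies on the root side of `e_k`. Now `label x = i < j` says that `x` is not in the subtree of
`v_j`, so it lies on the root side of `e_j`; and `label y = i + r ≥ j` says that `y` is in the
subtree of `v_{i+r}`, hence in that of `v_j`.
-/

open Classical SimpleGraph

noncomputable section

variable {V : Type*}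

namespace SimpleGraph

variable {G : SimpleGraph V}

lemma Walk.reachable_deleteEdges_or {a b u c : V} (W : G.Walk u c)
    (h : (G.deleteEdges {s(a, b)}).Reachable a c ∨ (G.deleteEdges {s(a, b)}).Reachable b c) :
    (G.deleteEdges {s(a, b)}).Reachable a u ∨ (G.deleteEdges {s(a, b)}).Reachable b u := by
  induction W with
  | nil => exact h
  | @cons u v c huv W ih =>
    by_cases he : s(u, v) = s(a, b)
    · rcases Sym2.eq_iff.mp he with ⟨rfl, -⟩ | ⟨rfl, -⟩
      · exact .inl .rfl
      · exact .inr .rfl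
    · have huv' : (G.deleteEdges {s(a, b)}).Adj u v := (deleteEdges_adj ..).mpr ⟨huv, he⟩
      exact (ih h).imp (·.trans huv'.reachable.symm) (·.trans huv'.reachable.symm)

lemma Preconnected.reachable_deleteEdges_or (hG : G.Preconnected) (a b u : V) :
    (G.deleteEdges {s(a, b)}).Reachable a u ∨ (G.deleteEdges {s(a, b)}).Reachable b u :=
  (hG u a).some.reachable_deleteEdges_or (.inl .rfl)

lemma Reachable.deleteEdges_of_not_reachable {a b u v : V} (h : G.Reachable a b)
    (hav : ¬ G.Reachable a v) : (G.deleteEdges {s(u, v)}).Reachable a b := by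
  by_contra hne
  obtain ⟨W⟩ := h
  exact hav ⟨W.takeUntil v (W.snd_mem_support_of_mem_edges
    (W.mem_edges_of_not_reachable_deleteEdges hne))⟩

lemma IsAcyclic.not_reachable_deleteEdges (hG : G.IsAcyclic) {a b : V} (h : G.Adj a b) :
    ¬ (G.deleteEdges {s(a, b)}).Reachable a b :=
  isBridge_iff.mp (isAcyclic_iff_forall_adj_isBridge.mp hG h)

end SimpleGraph

section PathInTree

variable {T : SimpleGraph V} {vp : ℕ → V} {l : ℕ}

lemma reachable_deleteEdges_of_adj_succ (hadj : ∀ m < l, T.Adj (vp m) (vp (m + 1)))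
    {D : Set (Sym2 V)} {a b : ℕ} (hab : a ≤ b) (hbl : b ≤ l)
    (hD : ∀ m, a ≤ m → m < b → s(vp m, vp (m + 1)) ∉ D) :
    (T.deleteEdges D).Reachable (vp a) (vp b) := by
  induction b, hab using Nat.le_induction with
  | base => exact .rfl
  | succ b hab ih =>
    refine (ih (by omega) fun m h1 h2 => hD m h1 (by omega)).trans (Adj.reachable ?_)
    exact (deleteEdges_adj ..).mpr ⟨hadj b (by omega), hD b hab (by omega)⟩

lemma eq_of_pathEdge_eq (hinj : Set.InjOn vp {m | m ≤ l}) {m k : ℕ} (hm : m < l) (hk : k < l)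
    (h : s(vp m, vp (m + 1)) = s(vp k, vp (k + 1))) : m = k := by
  rcases Sym2.eq_iff.mp h with ⟨h1, -⟩ | ⟨h1, h2⟩
  · exact hinj (by grind) (by grind) h1
  · have := hinj (by grind) (by grind) h1
    have := hinj (by grind) (by grind) h2
    omega

lemma reachable_deleteEdges_pathEdge (hadj : ∀ m < l, T.Adj (vp m) (vp (m + 1)))
    (hinj : Set.InjOn vp {m | m ≤ l}) {a b k : ℕ} (hab : a ≤ b) (hbl : b ≤ l) (hk : k < l)
    (hkab : k < a ∨ b ≤ k) :
    (T.deleteEdges {s(vp k, vp (k + 1))}).Reachable (vp a) (vp b) := by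
  refine reachable_deleteEdges_of_adj_succ hadj hab hbl fun m ham hmb he => ?_
  have := eq_of_pathEdge_eq hinj (by omega) hk he
  omega

lemma inSub_succ_iff {k : ℕ} {u : V} :
    inSub T vp (k + 1) u ↔ (T.deleteEdges {s(vp k, vp (k + 1))}).Reachable (vp (k + 1)) u := by
  simp [inSub]

lemma label_mem (u : V) : label T vp l u ∈ {k | k ≤ l ∧ inSub T vp k u} :=
  Nat.sSup_mem ⟨0, Nat.zero_le l, .inl rfl⟩ ⟨l, fun _ hk => hk.1⟩

lemma le_label {k : ℕ} {u : V} (hkl : k ≤ l) (hk : inSub T vp k u) : k ≤ label T vp l u :=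
  le_csSup ⟨l, fun _ hk => hk.1⟩ ⟨hkl, hk⟩

lemma inSub_of_le (hT : T.IsAcyclic) (hadj : ∀ m < l, T.Adj (vp m) (vp (m + 1)))
    (hinj : Set.InjOn vp {m | m ≤ l}) {j k : ℕ} {u : V} (hjk : j ≤ k) (hkl : k ≤ l)
    (hk : inSub T vp k u) : inSub T vp j u := by
  rcases j with _ | j
  · exact .inl rfl
  obtain ⟨k, rfl⟩ : ∃ k', k = k' + 1 := ⟨k - 1, by omega⟩
  rw [inSub_succ_iff] at hk ⊢
  refine (reachable_deleteEdges_pathEdge hadj hinj hjk hkl (by omega) (.inl (by omega))).trans ?_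
  rcases eq_or_lt_of_le hjk with hjk | hjk
  · obtain rfl : j = k := by omega
    exact hk
  -- `v_{j+1}` lies on the root side of `e_{k+1}`, so no walk from `v_{k+1}` in `T - e_{k+1}`
  -- uses `e_{j+1}`
  have hsep : ¬ (T.deleteEdges {s(vp k, vp (k + 1))}).Reachable (vp (k + 1)) (vp (j + 1)) :=
    fun h => hT.not_reachable_deleteEdges (hadj k (by omega)) <| (h.trans
      (reachable_deleteEdges_pathEdge hadj hinj (by omega) (by omega) (by omega) (.inr le_rfl))).symm
  refine (hk.deleteEdges_of_not_reachable (u := vp j) hsep).mono ?_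
  rw [deleteEdges_deleteEdges]
  exact deleteEdges_anti Set.subset_union_right

lemma reachable_root_of_not_inSub (hT : T.Preconnected) (hadj : ∀ m < l, T.Adj (vp m) (vp (m + 1)))
    (hinj : Set.InjOn vp {m | m ≤ l}) {k : ℕ} {u : V} (hk : k < l) (hu : ¬ inSub T vp (k + 1) u) :
    (T.deleteEdges {s(vp k, vp (k + 1))}).Reachable (vp 0) u :=
  (reachable_deleteEdges_pathEdge hadj hinj (Nat.zero_le k) hk.le hk (.inr le_rfl)).trans
    ((hT.reachable_deleteEdges_or _ _ u).resolve_right (inSub_succ_iff.not.mp hu))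

end PathInTree

theorem stmt8_general {V : Type*}
    (G : SimpleGraph V)
    (s t : V) (p : G.Walk s t) (hp : p.IsPath)
    (T : SimpleGraph V) (hT : T.IsTree)
    (hPT : ∀ e ∈ p.edges, e ∈ T.edgeSet)
    (i : ℕ)
    (x y : V)
    (r : ℕ)
    (hlx : label T p.getVert p.length x = i)
    (hly : label T p.getVert p.length y = i + r) :
    ∀ j, i < j → j ≤ i + r →
      (T.deleteEdges {s(p.getVert (j-1), p.getVert j)}).Reachable s x ∧
      (T.deleteEdges {s(p.getVert (j-1), p.getVert j)}).Reachable (p.getVert j) y := by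
  intro j hij hj
  obtain ⟨k, rfl⟩ : ∃ k, j = k + 1 := ⟨j - 1, by omega⟩
  have hadj : ∀ m < p.length, T.Adj (p.getVert m) (p.getVert (m + 1)) := fun m hm =>
    hPT _ (p.mk_mem_edges_iff_exists.mpr ⟨m, hm, rfl⟩)
  obtain ⟨hyl, hy⟩ : i + r ≤ p.length ∧ inSub T p.getVert (i + r) y := hly ▸ label_mem y
  have hkl : k < p.length := by omega
  rw [Nat.add_sub_cancel]
  refine ⟨?_, inSub_succ_iff.mp (inSub_of_le hT.isAcyclic hadj hp.getVert_injOn hj hyl hy)⟩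
  have hx : ¬ inSub T p.getVert (k + 1) x := fun hx => by
    have := le_label (T := T) hkl hx
    omega
  have hroot := reachable_root_of_not_inSub hT.connected.preconnected hadj hp.getVert_injOn hkl hx
  rwa [p.getVert_zero] at hroot

theorem stmt8 {V : Type*}
    (G : SimpleGraph V) (hconn : G.Connected) (w : V → V → ℝ)
    (hw : ∀ a b, G.Adj a b → 0 < w a b) (hws : ∀ a b, w a b = w b a)
    (s t : V) (p : G.Walk s t) (hp : p.IsPath)
    (hps : walkWeight G w p = wdist G w s t)
    (T : SimpleGraph V) (hTG : T ≤ G) (hT : T.IsTree)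
    (hSPT : ∀ v, wdist T w s v = wdist G w s v)
    (hPT : ∀ e ∈ p.edges, e ∈ T.edgeSet)
    (i : ℕ) (hi1 : 1 ≤ i) (hil : i ≤ p.length)
    (x y : V) (hxy : G.Adj x y) (hnt : s(x, y) ∉ T.edgeSet)
    (r : ℕ) (hr : 0 < r)
    (hlx : label T p.getVert p.length x = i)
    (hly : label T p.getVert p.length y = i + r) :
    ∀ j, i < j → j ≤ i + r →
      (T.deleteEdges {s(p.getVert (j-1), p.getVert j)}).Reachable s x ∧
      (T.deleteEdges {s(p.getVert (j-1), p.getVert j)}).Reachable (p.getVert j) y :=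
  stmt8_general G s t p hp T hT hPT i x y r hlx hly
end
end
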